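/- Let z_n(r) = -1 + 2·exp(-r²/(2n)) for an integer n ≥ 2, and let W(x,y) be the stereographic coordinate W = (φ₁+iφ₂)/(1+φ₃) of the hedgehog field φ(r,θ) = (√(1-z_n²)cos nθ, √(1-z_n²)sin nθ, z_n(r)). Then the partial derivative W_x along the line x = 0 satisfies W_x(0,y) = √(n/2)·(i·sgn(y))^{n-1} + O(y²), which has a jump discontinuity at y = 0; hence the radially symmetric degree-n field is not continuously differentiable at the origin. -/

import Mathlib

/-! Everywhere on the plane the stereographic coordinate factors as
`W = ρ(x² + y²) (x + iy)ⁿ` with `ρ(u) = √(e^{u/2n} - 1) / √uⁿ`: indeed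
`cos nθ + i sin nθ = ((x + iy)/r)ⁿ` by de Moivre, and
`√(1 - z²)/(1 + z) = √(e^{r²/2n} - 1)` for `z = z_n(r)`. Since `ρ(x² + y²)` is even in `x`,
`W_x(0, y) = n ρ(y²) (iy)ⁿ⁻¹ = n √(e^{y²/2n} - 1)/|y| · (i sgn y)ⁿ⁻¹`,
and `√(e^t - 1) = √t + O(t^{3/2})` gives the expansion.

If `φ` were `C¹` at the origin then so would be `W`, because `1 + φ₃ > 0`. Its partial
derivative `W_x(0, 0)` would then be both the limit `√(n/2) iⁿ⁻¹` of `W_x(0, y)` as `y → 0⁺`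
and the slope `lim_{x → 0⁺} W(x, 0)/x = 1/√(2n)` along the positive `x`-axis, whose moduli
differ for `n ≠ 1`. -/

open Real Complex

/-- The degree-`n` hedgehog profile `z_n(r) = -1 + 2 e^{-r²/(2n)}`. -/
noncomputable def zn (n : ℕ) (r : ℝ) : ℝ := -1 + 2 * Real.exp (-r ^ 2 / (2 * n))

/-- The radially symmetric degree-`n` hedgehog field in Cartesian coordinates. -/
noncomputable def hedgehog (n : ℕ) (p : ℝ × ℝ) : ℝ × ℝ × ℝ :=
  (Real.sqrt (1 - zn n (Real.sqrt (p.1 ^ 2 + p.2 ^ 2)) ^ 2) *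
      Real.cos (n * Complex.arg (p.1 + p.2 * Complex.I)),
   Real.sqrt (1 - zn n (Real.sqrt (p.1 ^ 2 + p.2 ^ 2)) ^ 2) *
      Real.sin (n * Complex.arg (p.1 + p.2 * Complex.I)),
   zn n (Real.sqrt (p.1 ^ 2 + p.2 ^ 2)))

/-- The stereographic coordinate `W = (φ₁ + iφ₂)/(1 + φ₃)` of the hedgehog field. -/
noncomputable def Wcoord (n : ℕ) (p : ℝ × ℝ) : ℂ :=
  (((hedgehog n p).1 : ℂ) + ((hedgehog n p).2.1 : ℂ) * Complex.I) /
    (1 + ((hedgehog n p).2.2 : ℂ))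

open Topology Filter

lemma Real.sign_mul_abs (r : ℝ) : Real.sign r * |r| = r := by
  rcases lt_trichotomy r 0 with h | rfl | h
  · rw [Real.sign_of_neg h, abs_of_neg h]; ring
  · simp
  · rw [Real.sign_of_pos h, abs_of_pos h]; ring

lemma abs_sqrt_exp_sub_one_sub_sqrt_le {t : ℝ} (ht₀ : 0 ≤ t) (ht₁ : t ≤ 1) :
    |√(Real.exp t - 1) - √t| ≤ t * √t / 2 := by
  have hlow : t ≤ Real.exp t - 1 := by linarith [Real.add_one_le_exp t]
  have hup : Real.exp t - 1 ≤ t * (1 + t / 2) ^ 2 := by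
    have := Real.abs_exp_sub_one_sub_id_le (x := t) (by rwa [abs_of_nonneg ht₀])
    nlinarith [abs_le.mp this]
  have h₁ : √t ≤ √(Real.exp t - 1) := Real.sqrt_le_sqrt hlow
  have h₂ : √(Real.exp t - 1) ≤ √t * (1 + t / 2) := by
    calc √(Real.exp t - 1) ≤ √(t * (1 + t / 2) ^ 2) := Real.sqrt_le_sqrt hup
      _ = √t * (1 + t / 2) := by rw [Real.sqrt_mul ht₀, Real.sqrt_sq (by positivity)]
  rw [abs_of_nonneg (by linarith)]
  linarith

lemma abs_sqrt_exp_sq_div_sub_one_div_abs_sub_le {c y : ℝ} (hc : 0 < c) (hy : y ≠ 0)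
    (hyc : y ^ 2 ≤ c) :
    |√(Real.exp (y ^ 2 / c) - 1) / |y| - (√c)⁻¹| ≤ y ^ 2 / (2 * c * √c) := by
  have hy₀ : 0 < |y| := abs_pos.mpr hy
  have hsc : 0 < √c := Real.sqrt_pos.mpr hc
  have hsqrt : √(y ^ 2 / c) = |y| / √c := by
    rw [Real.sqrt_div (sq_nonneg y), Real.sqrt_sq_eq_abs]
  have key := abs_sqrt_exp_sub_one_sub_sqrt_le (t := y ^ 2 / c) (by positivity)
    ((div_le_one hc).mpr hyc)
  rw [hsqrt] at key
  have : √(Real.exp (y ^ 2 / c) - 1) / |y| - (√c)⁻¹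
      = (√(Real.exp (y ^ 2 / c) - 1) - |y| / √c) / |y| := by field_simp
  rw [this, abs_div, abs_of_pos hy₀, div_le_iff₀ hy₀]
  calc _ ≤ y ^ 2 / c * (|y| / √c) / 2 := key
    _ = _ := by field_simp

lemma tendsto_sqrt_exp_sq_div_sub_one_div_abs {c : ℝ} (hc : 0 < c) :
    Tendsto (fun y => √(Real.exp (y ^ 2 / c) - 1) / |y|) (𝓝[≠] 0) (𝓝 (√c)⁻¹) := by
  rw [tendsto_iff_norm_sub_tendsto_zero]
  refine squeeze_zero' (Eventually.of_forall fun _ => norm_nonneg _) ?_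
    (g := fun y : ℝ => y ^ 2 / (2 * c * √c)) ?_
  · have hball : ∀ᶠ y : ℝ in 𝓝[≠] 0, y ^ 2 ≤ c := nhdsWithin_le_nhds
      ((continuous_pow 2).tendsto' 0 0 (by simp) |>.eventually (eventually_le_nhds hc))
    filter_upwards [hball, self_mem_nhdsWithin] with y hyc hy
    exact abs_sqrt_exp_sq_div_sub_one_div_abs_sub_le hc hy hyc
  · exact tendsto_nhdsWithin_of_tendsto_nhds (by
      simpa using ((continuous_pow 2).div_const (2 * c * √c)).tendsto (0 : ℝ))

noncomputable def hedgehogAmplitude (n : ℕ) (u : ℝ) : ℝ :=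
  √(Real.exp (u / (2 * n)) - 1) / √u ^ n

lemma one_add_zn_pos (n : ℕ) (r : ℝ) : 0 < 1 + zn n r := by
  unfold zn; linarith [Real.exp_pos (-r ^ 2 / (2 * n))]

lemma sqrt_one_sub_zn_sq (n : ℕ) (r : ℝ) :
    √(1 - zn n r ^ 2) = √(Real.exp (r ^ 2 / (2 * n)) - 1) * (1 + zn n r) := by
  have hexp : Real.exp (-r ^ 2 / (2 * n)) * Real.exp (r ^ 2 / (2 * n)) = 1 := by
    rw [← Real.exp_add, neg_div, neg_add_cancel, Real.exp_zero]
  have : 1 - zn n r ^ 2 = (Real.exp (r ^ 2 / (2 * n)) - 1) * (1 + zn n r) ^ 2 := by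
    unfold zn; linear_combination (-4 * Real.exp (-r ^ 2 / (2 * n))) * hexp
  rw [this, Real.sqrt_mul' _ (sq_nonneg _), Real.sqrt_sq (one_add_zn_pos n r).le]

lemma cos_add_sin_mul_I_nat_mul_arg (n : ℕ) {w : ℂ} (hw : w ≠ 0) :
    (Real.cos (n * w.arg) : ℂ) + Real.sin (n * w.arg) * I = (w / ‖w‖) ^ n := by
  have hw' : (‖w‖ : ℂ) ≠ 0 := by exact_mod_cast norm_ne_zero_iff.mpr hw
  have : Complex.cos w.arg + Complex.sin w.arg * I = w / ‖w‖ := by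
    rw [← Complex.exp_mul_I, eq_div_iff hw', mul_comm, Complex.norm_mul_exp_arg_mul_I]
  push_cast
  rw [← this, Complex.cos_add_sin_mul_I_pow]

lemma Wcoord_eq_hedgehogAmplitude_mul_pow (n : ℕ) (x y : ℝ) :
    Wcoord n (x, y) = hedgehogAmplitude n (x ^ 2 + y ^ 2) * (x + y * I) ^ n := by
  by_cases hw : (x : ℂ) + y * I = 0
  · obtain ⟨rfl, rfl⟩ : x = 0 ∧ y = 0 := by simpa [Complex.ext_iff] using hw
    norm_num [Wcoord, hedgehog, zn, hedgehogAmplitude]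
  have hnorm : ‖(x : ℂ) + y * I‖ = √(x ^ 2 + y ^ 2) :=
    Complex.norm_add_mul_I x y
  have hden : (1 : ℂ) + (zn n √(x ^ 2 + y ^ 2) : ℂ) ≠ 0 := by
    exact_mod_cast (one_add_zn_pos n _).ne'
  have hsq : √(x ^ 2 + y ^ 2) ^ 2 = x ^ 2 + y ^ 2 := Real.sq_sqrt (by positivity)
  have hr : (√(x ^ 2 + y ^ 2) : ℂ) ≠ 0 := by
    rw [← hnorm]; exact_mod_cast norm_ne_zero_iff.mpr hw
  simp only [Wcoord, hedgehog, Complex.ofReal_mul]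
  rw [mul_assoc, ← mul_add, cos_add_sin_mul_I_nat_mul_arg n hw, sqrt_one_sub_zn_sq, hsq,
    hnorm, hedgehogAmplitude]
  push_cast
  field_simp
  rw [div_pow, mul_assoc, div_mul_cancel₀ _ (pow_ne_zero n hr)]

lemma differentiableAt_hedgehogAmplitude {n : ℕ} (hn : n ≠ 0) {u : ℝ} (hu : 0 < u) :
    DifferentiableAt ℝ (hedgehogAmplitude n) u := by
  have hexp : Real.exp (u / (2 * n)) - 1 ≠ 0 :=
    sub_ne_zero.mpr ((Real.exp_eq_one_iff _).not.mpr (by positivity))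
  have hnum : DifferentiableAt ℝ (fun u : ℝ => √(Real.exp (u / (2 * n)) - 1)) u :=
    (((differentiableAt_id.div_const _).exp).sub_const 1).sqrt hexp
  have hden : DifferentiableAt ℝ (fun u : ℝ => √u ^ n) u :=
    (differentiableAt_id.sqrt hu.ne').pow n
  exact hnum.div hden (by positivity)

lemma hasDerivAt_Wcoord_fst_zero {n : ℕ} (hn : n ≠ 0) {y : ℝ} (hy : y ≠ 0) :
    HasDerivAt (fun x : ℝ => Wcoord n (x, y))
      (hedgehogAmplitude n (y ^ 2) * (n * (y * I) ^ (n - 1))) 0 := by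
  have hsq : HasDerivAt (fun x : ℝ => x ^ 2 + y ^ 2) 0 0 := by
    simpa using (hasDerivAt_pow 2 (0 : ℝ)).add_const (y ^ 2)
  have hamp : HasDerivAt (fun x : ℝ => (hedgehogAmplitude n (x ^ 2 + y ^ 2) : ℂ)) 0 0 := by
    have := ((differentiableAt_hedgehogAmplitude hn (u := 0 ^ 2 + y ^ 2)
      (by positivity)).hasDerivAt.comp 0 hsq).ofReal_comp
    simpa using this
  have hpow : HasDerivAt (fun x : ℝ => ((x : ℂ) + y * I) ^ n) (n * (y * I) ^ (n - 1)) 0 := by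
    simpa using ((hasDerivAt_id (0 : ℝ)).ofReal_comp.add_const (y * I)).fun_pow n
  rw [funext fun x => Wcoord_eq_hedgehogAmplitude_mul_pow n x y]
  exact (hamp.fun_mul hpow).congr_deriv (by norm_num)

lemma deriv_Wcoord_fst_zero {n : ℕ} (hn : n ≠ 0) {y : ℝ} (hy : y ≠ 0) :
    deriv (fun x : ℝ => Wcoord n (x, y)) 0 =
      ((n * (√(Real.exp (y ^ 2 / (2 * n)) - 1) / |y|) : ℝ) : ℂ) *
        (I * Real.sign y) ^ (n - 1) := by
  rw [(hasDerivAt_Wcoord_fst_zero hn hy).deriv, hedgehogAmplitude, Real.sqrt_sq_eq_abs]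
  have hy' : ((|y| : ℝ) : ℂ) ≠ 0 := by exact_mod_cast abs_ne_zero.mpr hy
  have hyI : (y : ℂ) * I = |y| * (I * Real.sign y) := by
    conv_lhs => rw [← Real.sign_mul_abs y]
    push_cast; ring
  obtain ⟨m, rfl⟩ := Nat.exists_eq_add_one_of_ne_zero hn
  rw [hyI, mul_pow]
  push_cast
  field_simp
  ring

lemma norm_deriv_Wcoord_fst_zero_sub_le {n : ℕ} (hn : n ≠ 0) {y : ℝ} (hy : y ≠ 0)
    (hyn : y ^ 2 ≤ 2 * n) :
    ‖deriv (fun x : ℝ => Wcoord n (x, y)) 0 - (√(n / 2) : ℂ) * (I * Real.sign y) ^ (n - 1)‖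
      ≤ n * (y ^ 2 / (2 * (2 * n) * √(2 * n))) := by
  have hn₀ : (0 : ℝ) < n := by positivity
  have hsqrt : √(n / 2) = n * (√(2 * n))⁻¹ := by
    rw [eq_mul_inv_iff_mul_eq₀ (by positivity), ← Real.sqrt_mul (by positivity)]
    rw [show (n : ℝ) / 2 * (2 * n) = n ^ 2 by ring, Real.sqrt_sq hn₀.le]
  have hsign : ‖I * (Real.sign y : ℂ)‖ = 1 := by
    rcases Real.sign_apply_eq_of_ne_zero y hy with h | h <;> simp [h]
  rw [deriv_Wcoord_fst_zero hn hy, hsqrt, ← sub_mul, ← Complex.ofReal_sub, norm_mul, norm_pow,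
    hsign, one_pow, mul_one, Complex.norm_real, Real.norm_eq_abs, ← mul_sub, abs_mul,
    abs_of_pos hn₀]
  gcongr
  exact abs_sqrt_exp_sq_div_sub_one_div_abs_sub_le (by positivity) hy hyn

lemma contDiffAt_Wcoord {k : WithTop ℕ∞} {n : ℕ} {p : ℝ × ℝ}
    (h : ContDiffAt ℝ k (hedgehog n) p) : ContDiffAt ℝ k (Wcoord n) p := by
  have hC : ∀ {g : ℝ × ℝ → ℝ}, ContDiffAt ℝ k g p →
      ContDiffAt ℝ k (fun q => (g q : ℂ)) p :=
    fun hg => Complex.ofRealCLM.contDiff.contDiffAt.comp p hg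
  have hden : (1 : ℂ) + ((hedgehog n p).2.2 : ℂ) ≠ 0 := by
    exact_mod_cast (one_add_zn_pos n _).ne'
  exact ((hC h.fst).add ((hC h.snd.fst).mul contDiffAt_const)).mul
    ((contDiffAt_const.add (hC h.snd.snd)).inv hden) |>.congr_of_eventuallyEq
    (Eventually.of_forall fun q => div_eq_mul_inv _ _)

lemma ContDiffAt.continuousAt_deriv_fst {F : Type*} [NormedAddCommGroup F] [NormedSpace ℝ F]
    {f : ℝ × ℝ → F} {p : ℝ × ℝ} (hf : ContDiffAt ℝ 1 f p) :
    ContinuousAt (fun q : ℝ × ℝ => deriv (fun x => f (x, q.2)) q.1) p := by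
  have hpartial : ∀ᶠ q in 𝓝 p, fderiv ℝ f q (1, 0) = deriv (fun x => f (x, q.2)) q.1 := by
    filter_upwards [hf.eventually (by simp)] with q hq
    exact (((hq.differentiableAt one_ne_zero).hasFDerivAt.comp_hasDerivAt q.1
      ((hasDerivAt_id q.1).prodMk (hasDerivAt_const q.1 q.2))).deriv).symm
  exact ((hf.continuousAt_fderiv one_ne_zero).clm_apply continuousAt_const).congr hpartial

lemma tendsto_deriv_Wcoord_fst_zero {n : ℕ} (hn : n ≠ 0) :
    Tendsto (fun y : ℝ => deriv (fun x : ℝ => Wcoord n (x, y)) 0) (𝓝[>] 0)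
      (𝓝 (((n * (√(2 * n))⁻¹ : ℝ) : ℂ) * I ^ (n - 1))) := by
  have hq := (tendsto_sqrt_exp_sq_div_sub_one_div_abs (c := 2 * n) (by positivity)).mono_left
    (nhdsGT_le_nhdsNE 0)
  refine (((hq.const_mul (n : ℝ)).ofReal).mul_const (I ^ (n - 1))).congr' ?_
  filter_upwards [self_mem_nhdsWithin] with y (hy : 0 < y)
  rw [deriv_Wcoord_fst_zero hn hy.ne', Real.sign_of_pos hy]
  simp

lemma tendsto_Wcoord_slope_snd_zero {n : ℕ} (hn : n ≠ 0) :
    Tendsto (fun x : ℝ => x⁻¹ • Wcoord n (x, 0)) (𝓝[>] 0)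
      (𝓝 (((√(2 * n))⁻¹ : ℝ) : ℂ)) := by
  have hq := (tendsto_sqrt_exp_sq_div_sub_one_div_abs (c := 2 * n) (by positivity)).mono_left
    (nhdsGT_le_nhdsNE 0)
  refine hq.ofReal.congr' ?_
  filter_upwards [self_mem_nhdsWithin] with x (hx : 0 < x)
  rw [Wcoord_eq_hedgehogAmplitude_mul_pow, hedgehogAmplitude]
  have hx' : (x : ℂ) ≠ 0 := by exact_mod_cast hx.ne'
  simp [Real.sqrt_sq hx.le, abs_of_pos hx, Complex.real_smul]
  field_simp

lemma not_contDiffAt_Wcoord {n : ℕ} (hn : 2 ≤ n) : ¬ ContDiffAt ℝ 1 (Wcoord n) (0, 0) := by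
  intro h
  have hn₀ : n ≠ 0 := by omega
  set L := deriv (fun x : ℝ => Wcoord n (x, 0)) 0
  have hyAxis : Tendsto (fun y : ℝ => ((0 : ℝ), y)) (𝓝[>] 0) (𝓝 (0, 0)) :=
    ((continuous_const.prodMk continuous_id).tendsto' 0 (0, 0) rfl).mono_left nhdsWithin_le_nhds
  have hL₁ : L = ((n * (√(2 * n))⁻¹ : ℝ) : ℂ) * I ^ (n - 1) :=
    tendsto_nhds_unique (h.continuousAt_deriv_fst.tendsto.comp hyAxis)
      (tendsto_deriv_Wcoord_fst_zero hn₀)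
  have hxLine : DifferentiableAt ℝ (fun x : ℝ => (x, (0 : ℝ))) 0 :=
    differentiableAt_id.prodMk (differentiableAt_const 0)
  have hxAxis : HasDerivAt (fun x : ℝ => Wcoord n (x, 0)) L 0 :=
    (DifferentiableAt.comp (f := fun x : ℝ => (x, (0 : ℝ))) 0 (h.differentiableAt one_ne_zero)
      hxLine).hasDerivAt
  have hW₀ : Wcoord n (0, 0) = 0 := by
    simp [Wcoord_eq_hedgehogAmplitude_mul_pow, hn₀]
  have hL₂ : L = (((√(2 * n))⁻¹ : ℝ) : ℂ) :=
    tendsto_nhds_unique (by simpa [hW₀] using hxAxis.tendsto_slope_zero_right)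
      (tendsto_Wcoord_slope_snd_zero hn₀)
  have hs : 0 < (√(2 * n))⁻¹ := by positivity
  have hnorm : (n : ℝ) * (√(2 * n))⁻¹ = (√(2 * n))⁻¹ := by
    simpa only [norm_mul, norm_pow, Complex.norm_I, one_pow, mul_one, Complex.norm_real,
      Real.norm_eq_abs, abs_of_pos hs, Nat.abs_cast]
      using congrArg norm (hL₁.symm.trans hL₂)
  have : (n : ℝ) = 1 := (mul_eq_right₀ hs.ne').mp hnorm
  norm_cast at this
  omega

/-- For `n ≥ 2`, `W_x(0,y) = √(n/2)·(i sgn y)^{n-1} + O(y²)`, which has a jump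
discontinuity across `y = 0`; hence the degree-`n` hedgehog field is not `C¹` at the
origin. -/
theorem stmt19 (n : ℕ) (hn : 2 ≤ n) :
    (∃ C > (0 : ℝ), ∃ δ > (0 : ℝ), ∀ y : ℝ, y ≠ 0 → |y| < δ →
      ‖deriv (fun x : ℝ => Wcoord n (x, y)) 0 -
        (Real.sqrt (n / 2) : ℂ) * (Complex.I * (Real.sign y : ℂ)) ^ (n - 1)‖ ≤ C * y ^ 2) ∧
    ¬ ContDiffAt ℝ 1 (hedgehog n) (0, 0) := by
  have hn₀ : n ≠ 0 := by omega
  refine ⟨⟨n / (2 * (2 * n) * √(2 * n)), by positivity, √(2 * n), by positivity,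
    fun y hy hyδ => ?_⟩, fun h => not_contDiffAt_Wcoord hn (contDiffAt_Wcoord h)⟩
  have hyn : y ^ 2 ≤ 2 * n := by
    rw [← sq_abs]; exact ((Real.lt_sqrt (abs_nonneg y)).mp hyδ).le
  calc _ ≤ n * (y ^ 2 / (2 * (2 * n) * √(2 * n))) :=
        norm_deriv_Wcoord_fst_zero_sub_le hn₀ hy hyn
    _ = _ := by ring
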